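/- Let ψ : ℝ^J → M^J assign to x = (x_1,…,x_J) the vector of measures ψ_j(x)(B) = Σ_{k∈C(j)} ρ_{k,j} ∫_{B ∩ (x_j, min_{i∈S(k|j)} x_i]} (1 - G_k(ξ)) dξ. Then for all x, y ∈ ℝ^J and each j, sup_{B Borel} |ψ_j(x)(B) - ψ_j(y)(B)| ≤ 2 max_{l=1,…,J} |x_l - y_l|, provided Σ_{k∈C(j)} ρ_{k,j} = 1. In particular ψ is continuous in total variation norm. -/

import Mathlib

/-!
Each summand of `ψ_j` integrates a function with values in `[0, 1]` over `B ∩ (x_j, min_{S} x]`.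
Moving `x` to `y` changes the integral by at most the Lebesgue measure of the symmetric
difference of the two intervals, which is at most `|x_j - y_j| + |min_S x - min_S y|`, and
both terms are bounded by `max_l |x_l - y_l|`. Since the weights `ρ_{k,j}` form a convex
combination, the same bound `2 max_l |x_l - y_l|` holds for `ψ_j`.
-/

open scoped Classical

/-- Stations visited by class `k` strictly before station `j` along its route. -/
def priorStations {J K : ℕ} (path : Fin K → List (Fin J)) (k : Fin K) (j : Fin J) :
    Finset (Fin J) :=
  ((path k).takeWhile (fun i => i ≠ j)).toFinset

/-- `ψ_j(x)(B) = Σ_{k ∈ C(j)} ρ_{k,j} ∫_{B ∩ (x_j, min_{i ∈ S(k|j)} x_i]} (1 - G_k(ξ)) dξ`,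
where the minimum over the empty set is `+∞`, giving the interval `(x_j, ∞)`. -/
noncomputable def psiVal {J K : ℕ} (path : Fin K → List (Fin J))
    (ρ : Fin K → Fin J → ℝ) (G : Fin K → ℝ → ℝ)
    (x : Fin J → ℝ) (j : Fin J) (B : Set ℝ) : ℝ :=
  ∑ k ∈ Finset.univ.filter (fun k => j ∈ path k),
    ρ k j * ∫ ξ in B ∩ (if h : (priorStations path k j).Nonempty
        then Set.Ioc (x j) ((priorStations path k j).inf' h x)
        else Set.Ioi (x j)), (1 - G k ξ)

open MeasureTheory Set
open scoped symmDiff Interval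

namespace Finset

lemma abs_inf'_sub_inf'_le {ι : Type*} (s : Finset ι) (hs : s.Nonempty) {x y : ι → ℝ} {M : ℝ}
    (hxy : ∀ i, |x i - y i| ≤ M) : |s.inf' hs x - s.inf' hs y| ≤ M := by
  have key : ∀ x y : ι → ℝ, (∀ i, |x i - y i| ≤ M) → s.inf' hs x - M ≤ s.inf' hs y :=
    fun x y hxy => le_inf' hs _ fun i hi => by
      linarith [inf'_le x hi, (abs_le.mp (hxy i)).2]
  have hyx : ∀ i, |y i - x i| ≤ M := fun i => abs_sub_comm (x i) (y i) ▸ hxy i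
  exact abs_sub_le_iff.mpr ⟨by linarith [key x y hxy], by linarith [key y x hyx]⟩

lemma abs_sum_mul_sub_sum_mul_le {ι : Type*} (s : Finset ι) {w a b : ι → ℝ} {c : ℝ}
    (hw : ∀ i ∈ s, 0 ≤ w i) (hw1 : ∑ i ∈ s, w i = 1) (hab : ∀ i ∈ s, |a i - b i| ≤ c) :
    |∑ i ∈ s, w i * a i - ∑ i ∈ s, w i * b i| ≤ c :=
  calc |∑ i ∈ s, w i * a i - ∑ i ∈ s, w i * b i| = |∑ i ∈ s, w i * (a i - b i)| := by
        simp only [mul_sub, sum_sub_distrib]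
    _ ≤ ∑ i ∈ s, w i * c := by
        refine (abs_sum_le_sum_abs _ _).trans (sum_le_sum fun i hi => ?_)
        rw [abs_mul, abs_of_nonneg (hw i hi)]
        exact mul_le_mul_of_nonneg_left (hab i hi) (hw i hi)
    _ = c := by rw [← sum_mul, hw1, one_mul]

end Finset

namespace Set

variable {α : Type*} [LinearOrder α]

lemma Ioc_symmDiff_Ioc_subset (a b c d : α) : Ioc a b ∆ Ioc c d ⊆ Ι a c ∪ Ι b d := by
  intro ξ
  simp only [mem_symmDiff, mem_Ioc, mem_union, mem_uIoc]
  grind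

lemma Ioi_symmDiff_Ioi (a c : α) : Ioi a ∆ Ioi c = Ι a c := by
  ext ξ
  simp only [mem_symmDiff, mem_Ioi, mem_uIoc]
  grind

end Set

lemma Real.volume_Ioc_symmDiff_Ioc_le (a b c d : ℝ) :
    volume (Ioc a b ∆ Ioc c d) ≤ ENNReal.ofReal (|a - c| + |b - d|) :=
  calc volume (Ioc a b ∆ Ioc c d) ≤ volume (Ι a c) + volume (Ι b d) :=
        (measure_mono (Ioc_symmDiff_Ioc_subset a b c d)).trans (measure_union_le _ _)
    _ = ENNReal.ofReal (|a - c| + |b - d|) := by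
        rw [Real.volume_uIoc, Real.volume_uIoc, abs_sub_comm c, abs_sub_comm d,
          ENNReal.ofReal_add (abs_nonneg _) (abs_nonneg _)]

lemma MeasureTheory.norm_setIntegral_sub_setIntegral_le {α E : Type*} [MeasurableSpace α]
    [NormedAddCommGroup E] [NormedSpace ℝ E] {μ : Measure α} {f : α → E} {C : ℝ}
    (hf : AEStronglyMeasurable f μ) (hfC : ∀ x, ‖f x‖ ≤ C) {s t : Set α}
    (hs : MeasurableSet s) (ht : MeasurableSet t) (hst : μ (s ∆ t) ≠ ⊤) :
    ‖(∫ x in s, f x ∂μ) - ∫ x in t, f x ∂μ‖ ≤ C * μ.real (s ∆ t) := by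
  rw [measure_symmDiff_eq hs.nullMeasurableSet ht.nullMeasurableSet] at hst
  obtain ⟨hst', hts'⟩ := ENNReal.add_ne_top.mp hst
  have hint_st : IntegrableOn f (s \ t) μ :=
    Measure.integrableOn_of_bounded hst' hf (Filter.Eventually.of_forall hfC)
  have hint_ts : IntegrableOn f (t \ s) μ :=
    Measure.integrableOn_of_bounded hts' hf (Filter.Eventually.of_forall hfC)
  have hdiff : μ.real (s ∆ t) = μ.real (s \ t) + μ.real (t \ s) := by
    rw [Set.symmDiff_def, measureReal_union disjoint_sdiff_sdiff (ht.diff hs) hst' hts']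
  by_cases hs_int : IntegrableOn f s μ
  · have ht_int : IntegrableOn f t μ :=
      (hs_int.union hint_ts).mono_set fun ξ hξ => by by_cases h : ξ ∈ s <;> simp [*]
    have hsplit : (∫ x in s, f x ∂μ) - ∫ x in t, f x ∂μ
        = (∫ x in s \ t, f x ∂μ) - ∫ x in t \ s, f x ∂μ := by
      rw [← integral_inter_add_sdiff ht hs_int, ← integral_inter_add_sdiff hs ht_int,
        inter_comm t s]
      abel
    rw [hsplit, hdiff, mul_add]
    refine (norm_sub_le _ _).trans (add_le_add ?_ ?_)
    · exact norm_setIntegral_le_of_norm_le_const hst'.lt_top fun x _ => hfC x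
    · exact norm_setIntegral_le_of_norm_le_const hts'.lt_top fun x _ => hfC x
  · have ht_int : ¬ IntegrableOn f t μ := fun ht_int =>
      hs_int <| (ht_int.union hint_st).mono_set fun ξ hξ => by by_cases h : ξ ∈ t <;> simp [*]
    obtain ⟨x, -⟩ : s.Nonempty :=
      nonempty_iff_ne_empty.mpr fun h => hs_int (h ▸ integrableOn_empty)
    rw [integral_undef hs_int, integral_undef ht_int, sub_zero, norm_zero]
    exact mul_nonneg ((norm_nonneg _).trans (hfC x)) measureReal_nonneg

def routeInterval {ι : Type*} (s : Finset ι) (j : ι) (x : ι → ℝ) : Set ℝ :=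
  if h : s.Nonempty then Ioc (x j) (s.inf' h x) else Ioi (x j)

section routeInterval

variable {ι : Type*} (s : Finset ι) (j : ι)

lemma measurableSet_routeInterval (x : ι → ℝ) : MeasurableSet (routeInterval s j x) := by
  unfold routeInterval
  split_ifs
  exacts [measurableSet_Ioc, measurableSet_Ioi]

lemma volume_routeInterval_symmDiff_le {x y : ι → ℝ} {M : ℝ} (hxy : ∀ i, |x i - y i| ≤ M) :
    volume (routeInterval s j x ∆ routeInterval s j y) ≤ ENNReal.ofReal (2 * M) := by
  unfold routeInterval
  split_ifs with hs
  · refine (Real.volume_Ioc_symmDiff_Ioc_le _ _ _ _).trans (ENNReal.ofReal_le_ofReal ?_)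
    linarith [hxy j, s.abs_inf'_sub_inf'_le hs hxy]
  · rw [Ioi_symmDiff_Ioi, Real.volume_uIoc, abs_sub_comm]
    exact ENNReal.ofReal_le_ofReal (by linarith [hxy j, abs_nonneg (x j - y j)])

lemma abs_setIntegral_inter_routeInterval_sub_le {g : ℝ → ℝ} (hg : Measurable g)
    (hg1 : ∀ ξ, |g ξ| ≤ 1) {B : Set ℝ} (hB : MeasurableSet B) {x y : ι → ℝ} {M : ℝ}
    (hxy : ∀ i, |x i - y i| ≤ M) :
    |(∫ ξ in B ∩ routeInterval s j x, g ξ) - ∫ ξ in B ∩ routeInterval s j y, g ξ| ≤ 2 * M := by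
  have hvol : volume ((B ∩ routeInterval s j x) ∆ (B ∩ routeInterval s j y))
      ≤ ENNReal.ofReal (2 * M) := by
    rw [← inter_symmDiff_distrib_left]
    exact (measure_mono inter_subset_right).trans (volume_routeInterval_symmDiff_le s j hxy)
  have hM : 0 ≤ 2 * M := by linarith [(abs_nonneg _).trans (hxy j)]
  calc |(∫ ξ in B ∩ routeInterval s j x, g ξ) - ∫ ξ in B ∩ routeInterval s j y, g ξ|
      ≤ 1 * volume.real ((B ∩ routeInterval s j x) ∆ (B ∩ routeInterval s j y)) :=
        norm_setIntegral_sub_setIntegral_le hg.aestronglyMeasurable hg1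
          (hB.inter (measurableSet_routeInterval s j x))
          (hB.inter (measurableSet_routeInterval s j y))
          (ne_top_of_le_ne_top ENNReal.ofReal_ne_top hvol)
    _ ≤ 2 * M := by rw [one_mul]; exact ENNReal.toReal_le_of_le_ofReal hM hvol

end routeInterval

theorem stmt16 {J K : ℕ} (hJ : 0 < J)
    (path : Fin K → List (Fin J))
    (ρ : Fin K → Fin J → ℝ) (hρ : ∀ j k, 0 ≤ ρ k j)
    (hρsum : ∀ j : Fin J, ∑ k ∈ Finset.univ.filter (fun k => j ∈ path k), ρ k j = 1)
    (G : Fin K → ℝ → ℝ)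
    (hmono : ∀ k, Monotone (G k))
    (hG0 : ∀ k ξ, 0 ≤ G k ξ) (hG1 : ∀ k ξ, G k ξ ≤ 1) :
    ∀ (x y : Fin J → ℝ) (j : Fin J) (B : Set ℝ), MeasurableSet B →
      |psiVal path ρ G x j B - psiVal path ρ G y j B| ≤
        2 * Finset.univ.sup' ⟨⟨0, hJ⟩, Finset.mem_univ _⟩ (fun l => |x l - y l|) := by
  intro x y j B hB
  have hxy : ∀ l, |x l - y l| ≤ Finset.univ.sup' ⟨⟨0, hJ⟩, Finset.mem_univ _⟩
      (fun l => |x l - y l|) := fun l => Finset.le_sup' (fun l => |x l - y l|) (Finset.mem_univ l)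
  refine Finset.abs_sum_mul_sub_sum_mul_le _ (fun k _ => hρ j k) (hρsum j) fun k _ => ?_
  exact abs_setIntegral_inter_routeInterval_sub_le (priorStations path k j) j
    (g := fun ξ => 1 - G k ξ) (measurable_const.sub (hmono k).measurable)
    (fun ξ => abs_le.mpr ⟨by linarith [hG1 k ξ], by linarith [hG0 k ξ]⟩) hB hxy
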